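/- Let G be a cofinitary group, r ∈ 2^ω, and (s,E) a condition of Z†_G(r). Then every condition (t,E) of Z_G with (t,E) ≤ (s,E) is itself a condition of Z†_G(r). -/

import Mathlib

noncomputable section

/-- Permutations of the natural numbers (elements of `S_∞`). -/
abbrev Perm' := Equiv.Perm ℕ

/-- A letter of a word over `G ∪ {x, x⁻¹}`: either a group element (of `S_∞`),
or `Sum.inr true` standing for `x`, or `Sum.inr false` standing for `x⁻¹`. -/
abbrev Letter := Perm' ⊕ Bool

/-- A word is a list of letters, written left to right
(the leftmost letter is applied last). -/
abbrev Word := List Letter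

/-- A subgroup of `S_∞` is cofinitary if every non-identity element
has only finitely many fixed points. -/
def Cofinitary (G : Subgroup Perm') : Prop :=
  ∀ g ∈ G, g ≠ 1 → {n : ℕ | g n = n}.Finite

/-- A set of pairs is a partial injection (functional and injective). -/
def PartInj (s : Set (ℕ × ℕ)) : Prop :=
  (∀ ⦃a b c⦄, (a, b) ∈ s → (a, c) ∈ s → b = c) ∧
  (∀ ⦃a b c⦄, (a, c) ∈ s → (b, c) ∈ s → a = b)

/-- Domain of a partial injection given as a set of pairs. -/
def pdom (s : Set (ℕ × ℕ)) : Set ℕ := Prod.fst '' s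

/-- Range of a partial injection given as a set of pairs. -/
def pran (s : Set (ℕ × ℕ)) : Set ℕ := Prod.snd '' s

/-- The relation given by substituting the partial injection `s` for `x`
(and `s⁻¹` for `x⁻¹`) in a single letter. -/
def letterRel (s : Set (ℕ × ℕ)) : Letter → ℕ → ℕ → Prop
  | Sum.inl g => fun a b => g a = b
  | Sum.inr true => fun a b => (a, b) ∈ s
  | Sum.inr false => fun a b => (b, a) ∈ s

/-- The relation `w[s]`: evaluation of a word at the partial injection `s`,
composing the letter relations (rightmost letter applied first). -/
def wordRel (s : Set (ℕ × ℕ)) : Word → ℕ → ℕ → Prop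
  | [] => fun a b => a = b
  | l :: w => fun a b => ∃ c, wordRel s w a c ∧ letterRel s l c b

/-- `fix(w[s])`, the set of fixed points of the partial injection `w[s]`. -/
def wordFix (s : Set (ℕ × ℕ)) (w : Word) : Set ℕ := {n | wordRel s w n n}

/-- The word `x^k` for an integer `k` (for `k < 0`, `|k|` copies of `x⁻¹`). -/
def xpow (k : ℤ) : Word :=
  if 0 ≤ k then List.replicate k.toNat (Sum.inr true : Letter)
  else List.replicate (-k).toNat (Sum.inr false : Letter)

/-- The block `g x^k` as a word. -/
def blockWord (p : Perm' × ℤ) : Word := Sum.inl p.1 :: xpow p.2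

/-- `w` is a nice word (member of `W*_G`): `w = x^{k₀}` with `k₀ > 0`, or
`w = g_l x^{k_l} ⋯ g₁ x^{k₁} g₀ x^{k₀}` with `k₀ > 0`, all `k_i ≠ 0` and all
`g_i ∈ G \ {id}`. -/
def IsNice (G : Subgroup Perm') (w : Word) : Prop :=
  (∃ k : ℕ, 0 < k ∧ w = xpow (k : ℤ)) ∨
  (∃ bs : List (Perm' × ℤ), bs ≠ [] ∧
    (∀ p ∈ bs, p.1 ∈ G ∧ p.1 ≠ 1 ∧ p.2 ≠ 0) ∧
    (∃ p, bs.getLast? = some p ∧ 0 < p.2) ∧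
    w = (bs.map blockWord).flatten)

/-- The number of occurrences of `x` or `x⁻¹` in a word. -/
def xOccurrences (w : Word) : ℕ := w.countP (fun l => l.isRight)

/-- `w ∈ W¹_G`: a nice word with exactly one occurrence of `x` or `x⁻¹`. -/
def IsNiceOne (G : Subgroup Perm') (w : Word) : Prop :=
  IsNice G w ∧ xOccurrences w = 1

/-- `(s, E)` is a condition of Zhang's forcing `Z_G`: `s` is a finite partial
injection and `E` a finite set of nice words. -/
def ZCond (G : Subgroup Perm') (s : Set (ℕ × ℕ)) (E : Set Word) : Prop :=
  s.Finite ∧ PartInj s ∧ E.Finite ∧ ∀ w ∈ E, IsNice G w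

/-- `(t, F) ≤ (s, E)` in Zhang's forcing: `s ⊆ t`, `E ⊆ F`, and
`fix(w[t]) = fix(w[s])` for every `w ∈ E`. -/
def ZLe (t : Set (ℕ × ℕ)) (F : Set Word) (s : Set (ℕ × ℕ)) (E : Set Word) : Prop :=
  s ⊆ t ∧ E ⊆ F ∧ ∀ w ∈ E, wordFix t w = wordFix s w

/-- An injective tree: a nonempty set of finite sequences closed under initial
segments, all of whose elements are injective sequences. -/
def IsInjTree (T : Set (List ℕ)) : Prop :=
  T.Nonempty ∧ (∀ t ∈ T, ∀ s : List ℕ, s <+: t → s ∈ T) ∧ ∀ t ∈ T, t.Nodup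

/-- `T ∈ I_i(P)⁺`: an injective tree such that for every `s ∈ T` and every
finite `P₀ ⊆ P` there are `t ∈ T` extending `s` and `k ∈ dom(t) \ dom(s)` with
`t(k) ≠ f(k)` for all `f ∈ P₀`. -/
def TreePos (P : Set Perm') (T : Set (List ℕ)) : Prop :=
  IsInjTree T ∧
  ∀ s ∈ T, ∀ P₀ ⊆ P, P₀.Finite →
    ∃ t ∈ T, s <+: t ∧ ∃ k, s.length ≤ k ∧ k < t.length ∧
      ∀ f ∈ P₀, t.getD k 0 ≠ f k

/-- A set `O` is closed under a relation `R` and its inverse. -/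
def RelClosed (R : ℕ → ℕ → Prop) (O : Set ℕ) : Prop :=
  ∀ a b, R a b → (a ∈ O ↔ b ∈ O)

/-- The orbit of `n` under the (partial injective) relation `R`: the smallest
set containing `n` closed under applications of `R` and `R⁻¹`. -/
def relOrbit (R : ℕ → ℕ → Prop) (n : ℕ) : Set ℕ :=
  ⋂₀ {O : Set ℕ | n ∈ O ∧ RelClosed R O}

/-- The set of all orbits of the relation `R`. -/
def relOrbits (R : ℕ → ℕ → Prop) : Set (Set ℕ) := {O | ∃ n, O = relOrbit R n}

/-- Domain of a relation. -/
def relDom (R : ℕ → ℕ → Prop) : Set ℕ := {a | ∃ b, R a b}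

/-- Range of a relation. -/
def relRan (R : ℕ → ℕ → Prop) : Set ℕ := {b | ∃ a, R a b}

/-- The set of closed orbits of `R`: those orbits contained in `dom ∩ ran`. -/
def relClosedOrbits (R : ℕ → ℕ → Prop) : Set (Set ℕ) :=
  {O ∈ relOrbits R | O ⊆ relDom R ∩ relRan R}

/-- The relation of a partial injection given as a set of pairs. -/
def sRel (s : Set (ℕ × ℕ)) : ℕ → ℕ → Prop := fun a b => (a, b) ∈ s

/-- The relation (graph) of a permutation of `ℕ`. -/
def permRel (f : Perm') : ℕ → ℕ → Prop := fun a b => f a = b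

/-- A partial injection `s` is nice: every closed orbit has its minimum below
the minimum of the complement of the union of all closed orbits. -/
def NiceInj (s : Set (ℕ × ℕ)) : Prop :=
  ∀ O ∈ relClosedOrbits (sRel s),
    sInf O < sInf {n : ℕ | n ∉ ⋃₀ relClosedOrbits (sRel s)}

/-- The position of a closed orbit `O` of `s` in the well-order of closed
orbits by their minima. -/
def orbitIndex (s : Set (ℕ × ℕ)) (O : Set ℕ) : ℕ :=
  {P ∈ relClosedOrbits (sRel s) | sInf P < sInf O}.ncard

/-- `s` codes `r`, i.e. `o_s ⊆ r`: the `n`-th closed orbit (in the well-order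
by minima) has cardinality congruent to `r(n)` mod 2. -/
def CodesReal (s : Set (ℕ × ℕ)) (r : ℕ → Fin 2) : Prop :=
  ∀ O ∈ relClosedOrbits (sRel s), O.ncard % 2 = (r (orbitIndex s O) : ℕ)

/-- `(s, E)` is a condition of `Z_G(r)`. -/
def ZrCond (G : Subgroup Perm') (r : ℕ → Fin 2)
    (s : Set (ℕ × ℕ)) (E : Set Word) : Prop :=
  ZCond G s E ∧ NiceInj s ∧ CodesReal s r

/-- The `n`-th prime. -/
def pPrime (n : ℕ) : ℕ := Nat.nth Nat.Prime n

/-- The orbit-coding function `o†`: `o†(n)` is the number of closed orbits of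
`R` of cardinality `p_n`, modulo 2. -/
def odag (R : ℕ → ℕ → Prop) (n : ℕ) : ℕ :=
  {O ∈ relClosedOrbits R | O.ncard = pPrime n}.ncard % 2

/-- `v^k`: the word `v` concatenated `k` times. -/
def wpow (v : Word) (k : ℕ) : Word := (List.replicate k v).flatten

/-- `w ∈ W†_G`: a nice word that is indecomposable, i.e. not of the form `v^k`
for a nice word `v` and `k > 1`. -/
def Indecomposable (G : Subgroup Perm') (w : Word) : Prop :=
  IsNice G w ∧ ¬∃ v : Word, IsNice G v ∧ ∃ k : ℕ, 1 < k ∧ w = wpow v k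

/-- The inverse of a letter. -/
def letterInv : Letter → Letter
  | Sum.inl g => Sum.inl g⁻¹
  | Sum.inr b => Sum.inr (!b)

/-- The inverse of a word. -/
def wordInv (w : Word) : Word := (w.map letterInv).reverse

/-- `E` is closed under cyclic permutations and inverses thereof within `W*_G`. -/
def CyclClosed (G : Subgroup Perm') (E : Set Word) : Prop :=
  ∀ w ∈ E, ∀ w₀ w₁ : Word, w = w₀ ++ w₁ →
    (IsNice G (w₁ ++ w₀) → w₁ ++ w₀ ∈ E) ∧
    (IsNice G (wordInv (w₁ ++ w₀)) → wordInv (w₁ ++ w₀) ∈ E)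

/-- `(s, E)` is a condition of `Z†_G(r)`: a Zhang condition such that `E` is
closed under cyclic permutations and inverses thereof in `W*_G`, and whenever
`w = v^k ∈ E` with `v ∈ W†_G` then `v^l ∈ E` for all `0 < l ≤ k` and `o†_{v[s]}`
codes `r` up to `n` for every `n` with `p_n ≤ k`. -/
def ZdagCond (G : Subgroup Perm') (r : ℕ → Fin 2)
    (s : Set (ℕ × ℕ)) (E : Set Word) : Prop :=
  ZCond G s E ∧ CyclClosed G E ∧
  ∀ w ∈ E, ∀ v : Word, ∀ k : ℕ, Indecomposable G v → w = wpow v k →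
    (∀ l : ℕ, 0 < l → l ≤ k → wpow v l ∈ E) ∧
    (∀ n : ℕ, pPrime n ≤ k → ∀ i ≤ n, odag (wordRel s v) i = (r i : ℕ))

/-- Substituting the permutation `f` for `x` in a letter. -/
def letterPerm (f : Perm') : Letter → Perm'
  | Sum.inl g => g
  | Sum.inr true => f
  | Sum.inr false => f⁻¹

/-- `w[f]`: evaluation of a word at the permutation `f`. -/
def wordPerm (f : Perm') (w : Word) : Perm' := (w.map (letterPerm f)).prod

/-- Two functions are eventually different. -/
def EvDiff (f g : ℕ → ℕ) : Prop := {k : ℕ | f k = g k}.Finite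

/-- A set of permutations is an eventually different family. -/
def EDFamily (P : Set Perm') : Prop :=
  ∀ f ∈ P, ∀ g ∈ P, f ≠ g → EvDiff f g


/-! For a partial injection `R` and a prime `p`, the closed orbits of `R` of size `p`
partition `fix(R^p) \ fix(R)` into blocks of size `p`, so their number is determined by
`fix(R)` and `fix(R^p)`. If `(t, E) ≤ (s, E)` and `v^k ∈ E` with `p ≤ k`, then `v, v^p ∈ E`,
so `v[t]` and `v[s]` have the same fixed points and so do their `p`-th powers; hence
`o†_{v[t]}` and `o†_{v[s]}` agree at every `i` with `p_i ≤ k`. The remaining clauses of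
`Z†_G(r)` do not involve the partial injection. -/

open Relator

lemma Set.PairwiseDisjoint.ncard_sUnion_of_ncard_eq {α : Type*} {𝒪 : Set (Set α)} {p : ℕ}
    (hdisj : 𝒪.PairwiseDisjoint id) (hp : 0 < p) (hcard : ∀ O ∈ 𝒪, O.ncard = p) :
    (⋃₀ 𝒪).ncard = 𝒪.ncard * p := by
  by_cases hfin : 𝒪.Finite
  · induction 𝒪, hfin using Set.Finite.induction_on with
    | empty => simp
    | @insert O 𝒪 hO hfin ih =>
      have hOfin : O.Finite := Set.finite_of_ncard_pos (hcard O (Set.mem_insert _ _) ▸ hp)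
      have hUfin : (⋃₀ 𝒪).Finite := hfin.sUnion fun U hU =>
        Set.finite_of_ncard_pos (hcard U (Set.mem_insert_of_mem _ hU) ▸ hp)
      have hd : Disjoint O (⋃₀ 𝒪) := Set.disjoint_sUnion_right.2 fun U hU =>
        hdisj (Set.mem_insert _ _) (Set.mem_insert_of_mem _ hU) (by rintro rfl; exact hO hU)
      rw [Set.sUnion_insert, Set.ncard_union_eq hd hOfin hUfin,
        ih (hdisj.subset (Set.subset_insert _ _)) fun U hU => hcard U (Set.mem_insert_of_mem _ hU),
        Set.ncard_insert_of_notMem hO hfin, hcard O (Set.mem_insert _ _)]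
      ring
  · have hUinf : (⋃₀ 𝒪).Infinite := fun hU =>
      hfin (hU.finite_subsets.subset fun O hO => Set.subset_sUnion_of_mem hO)
    rw [hUinf.ncard, Set.Infinite.ncard hfin, zero_mul]

section RelPow

variable {α : Type*}

lemma Relator.RightUnique.comp {β γ : Type*} {R : α → β → Prop} {S : β → γ → Prop}
    (hR : RightUnique R) (hS : RightUnique S) : RightUnique (Relation.Comp R S) :=
  fun _ _ _ ⟨_, hab, hbc⟩ ⟨_, hab', hbc'⟩ => hS (hR hab hab' ▸ hbc) hbc'

lemma Relator.LeftUnique.comp {β γ : Type*} {R : α → β → Prop} {S : β → γ → Prop}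
    (hR : LeftUnique R) (hS : LeftUnique S) : LeftUnique (Relation.Comp R S) :=
  fun _ _ _ ⟨_, hab, hbc⟩ ⟨_, hab', hbc'⟩ => hR hab (hS hbc hbc' ▸ hab')

def relPow (R : α → α → Prop) : ℕ → α → α → Prop
  | 0 => Eq
  | n + 1 => Relation.Comp (relPow R n) R

variable {R : α → α → Prop} {a b e : α} {d i j m n : ℕ}

lemma relPow_zero : relPow R 0 a b ↔ a = b := Iff.rfl

lemma relPow_succ : relPow R (n + 1) a b ↔ ∃ c, relPow R n a c ∧ R c b := Iff.rfl

lemma relPow_one : relPow R 1 a b ↔ R a b := by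
  simp [relPow_succ, relPow_zero]

lemma relPow_add : relPow R (m + n) a b ↔ ∃ c, relPow R m a c ∧ relPow R n c b := by
  induction n generalizing b with
  | zero => simp [relPow_zero]
  | succ n ih =>
    simp only [← add_assoc, relPow_succ, ih]
    exact ⟨fun ⟨c, ⟨d, had, hdc⟩, hcb⟩ => ⟨d, had, c, hdc, hcb⟩,
      fun ⟨d, had, c, hdc, hcb⟩ => ⟨c, ⟨d, had, hdc⟩, hcb⟩⟩

lemma Relator.RightUnique.relPow (hR : RightUnique R) : ∀ n, RightUnique (relPow R n)
  | 0 => fun _ _ _ h h' => h.symm.trans h'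
  | n + 1 => (hR.relPow n).comp hR

lemma Relator.LeftUnique.relPow (hR : LeftUnique R) : ∀ n, LeftUnique (relPow R n)
  | 0 => fun _ _ _ h h' => h.trans h'.symm
  | n + 1 => (hR.relPow n).comp hR

lemma exists_relPow_of_le (h : relPow R n a b) (hm : m ≤ n) : ∃ c, relPow R m a c := by
  obtain ⟨c, hc, -⟩ := relPow_add.1 (Nat.add_sub_cancel' hm ▸ h)
  exact ⟨c, hc⟩

lemma relPow_mul_self (ha : relPow R d a a) : ∀ q, relPow R (d * q) a a
  | 0 => rfl
  | q + 1 => relPow_add.2 ⟨a, relPow_mul_self ha q, ha⟩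

lemma relPow_mod (hR : RightUnique R) (ha : relPow R d a a) (h : relPow R m a e) :
    relPow R (m % d) a e := by
  rw [← Nat.div_add_mod m d] at h
  obtain ⟨c, hc, hce⟩ := relPow_add.1 h
  rwa [hR.relPow _ hc (relPow_mul_self ha _)] at hce

lemma relPow_sub_self (hR : LeftUnique R) (hi : relPow R i a b) (hj : relPow R j a b)
    (hij : i ≤ j) : relPow R (j - i) a a := by
  obtain ⟨c, hc, hcb⟩ := relPow_add.1 (Nat.sub_add_cancel hij ▸ hj)
  rwa [hR.relPow _ hcb hi] at hc

lemma exists_minimal_period (ha : relPow R n a a) (hn : 0 < n) :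
    ∃ d, 0 < d ∧ relPow R d a a ∧ ∀ m, 0 < m → m < d → ¬relPow R m a a := by
  classical
  have h : ∃ d, 0 < d ∧ relPow R d a a := ⟨n, hn, ha⟩
  exact ⟨Nat.find h, (Nat.find_spec h).1, (Nat.find_spec h).2,
    fun m hm hlt hma => Nat.find_min h hlt ⟨hm, hma⟩⟩

end RelPow

section Orbits

variable {R : ℕ → ℕ → Prop} {a b n : ℕ} {O : Set ℕ}

lemma mem_relOrbit_self (R : ℕ → ℕ → Prop) (n : ℕ) : n ∈ relOrbit R n :=
  fun _ hO => hO.1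

lemma relOrbit_subset (hn : n ∈ O) (hO : RelClosed R O) : relOrbit R n ⊆ O :=
  Set.sInter_subset_of_mem ⟨hn, hO⟩

lemma relClosed_relOrbit (R : ℕ → ℕ → Prop) (n : ℕ) : RelClosed R (relOrbit R n) :=
  fun a b hab => by
    simp only [relOrbit, Set.mem_sInter]
    exact forall₂_congr fun O hO => hO.2 a b hab

lemma relOrbit_eq_of_rel (h : R a b) : relOrbit R a = relOrbit R b := by
  unfold relOrbit
  congr 1
  ext O
  exact and_congr_left fun hO => hO a b h

lemma relOrbit_eq_of_mem (h : a ∈ relOrbit R n) : relOrbit R a = relOrbit R n :=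
  relOrbit_subset (O := {b | relOrbit R b = relOrbit R n}) rfl
    (fun _ _ hbc => by simp only [Set.mem_ofPred_eq, relOrbit_eq_of_rel hbc]) h

lemma relOrbits_pairwiseDisjoint (R : ℕ → ℕ → Prop) :
    (relOrbits R).PairwiseDisjoint id := by
  rintro _ ⟨m, rfl⟩ _ ⟨n, rfl⟩ hne
  refine Set.disjoint_left.2 fun a ham han => hne ?_
  rw [← relOrbit_eq_of_mem ham, ← relOrbit_eq_of_mem han]

lemma mem_relOrbit_of_relPow : ∀ {m b}, relPow R m a b → b ∈ relOrbit R a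
  | 0, _, rfl => mem_relOrbit_self R a
  | _ + 1, _, ⟨c, hc, hcb⟩ => (relClosed_relOrbit R a c _ hcb).1 (mem_relOrbit_of_relPow hc)

lemma relOrbit_eq_singleton_of_rel_self (hR : BiUnique R) (ha : R a a) :
    relOrbit R a = {a} := by
  refine (relOrbit_subset (Set.mem_singleton a) fun b c hbc => ?_).antisymm
    (Set.singleton_subset_iff.2 (mem_relOrbit_self R a))
  simp only [Set.mem_singleton_iff]
  exact ⟨fun h => hR.2 (h ▸ hbc) ha, fun h => hR.1 (h ▸ hbc) ha⟩

end Orbits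

section PeriodicPoints

variable {R : ℕ → ℕ → Prop} {a d : ℕ}

lemma relClosed_setOf_relPow_self (hR : BiUnique R) (hd : 0 < d) :
    RelClosed R {e | relPow R d e e} := by
  obtain ⟨d, rfl⟩ : ∃ d', d = d' + 1 := ⟨d - 1, by omega⟩
  intro b c hbc
  simp only [Set.mem_ofPred_eq]
  constructor
  · intro hb
    obtain ⟨c', hbc', hc'b⟩ := relPow_add.1 (add_comm d 1 ▸ hb)
    rw [hR.2 (relPow_one.1 hbc') hbc] at hc'b
    exact relPow_add.2 ⟨b, hc'b, relPow_one.2 hbc⟩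
  · rintro ⟨b', hcb', hb'c⟩
    rw [hR.1 hb'c hbc] at hcb'
    exact add_comm d 1 ▸ relPow_add.2 ⟨c, relPow_one.2 hbc, hcb'⟩

lemma relOrbit_subset_relDom_inter_relRan (hR : BiUnique R) (hd : 0 < d)
    (ha : relPow R d a a) : relOrbit R a ⊆ relDom R ∩ relRan R := by
  obtain ⟨d, rfl⟩ : ∃ d', d = d' + 1 := ⟨d - 1, by omega⟩
  intro b hb
  have hbb : relPow R (d + 1) b b := relOrbit_subset (O := {e | relPow R (d + 1) e e}) ha
    (relClosed_setOf_relPow_self hR hd) hb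
  obtain ⟨c', hbc', -⟩ := relPow_add.1 (add_comm d 1 ▸ hbb)
  obtain ⟨c, -, hcb⟩ := hbb
  exact ⟨⟨c', relPow_one.1 hbc'⟩, ⟨c, hcb⟩⟩

lemma relOrbit_eq_setOf_relPow (hR : BiUnique R) (hd : 0 < d) (ha : relPow R d a a) :
    relOrbit R a = {e | ∃ m, relPow R m a e} := by
  refine (relOrbit_subset (O := {e | ∃ m, relPow R m a e}) ⟨0, rfl⟩
    fun b c hbc => ?_).antisymm
    fun _ ⟨_, hm⟩ => mem_relOrbit_of_relPow hm
  simp only [Set.mem_ofPred_eq]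
  refine ⟨fun ⟨m, hm⟩ => ⟨m + 1, b, hm, hbc⟩, fun ⟨m, hm⟩ => ?_⟩
  -- `c` is also reached in `d + m > 0` steps, and the step before it must come from `b`
  obtain ⟨k, hk⟩ : ∃ k, d + m = k + 1 := ⟨d + m - 1, by omega⟩
  obtain ⟨b', hb', hb'c⟩ := hk ▸ relPow_add.2 ⟨a, ha, hm⟩
  exact ⟨k, hR.1 hb'c hbc ▸ hb'⟩

lemma ncard_relOrbit_eq_minimal_period (hR : BiUnique R) (hd : 0 < d) (ha : relPow R d a a)
    (hmin : ∀ m, 0 < m → m < d → ¬relPow R m a a) : (relOrbit R a).ncard = d := by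
  have hex : ∀ i < d, ∃ e, relPow R i a e := fun i hi => exists_relPow_of_le ha hi.le
  choose f hf using hex
  rw [relOrbit_eq_setOf_relPow hR hd ha]
  refine Set.ncard_eq_of_bijective f (fun e ⟨m, hm⟩ => ?_) (fun i hi => ⟨i, hf i hi⟩) ?_
  · have hmd := Nat.mod_lt m hd
    exact ⟨m % d, hmd, hR.2.relPow _ (hf _ hmd) (relPow_mod hR.2 ha hm)⟩
  · intro i j hi hj hij
    by_contra hne
    rcases Nat.lt_or_gt_of_ne hne with h | h
    · exact hmin (j - i) (by omega) (by omega)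
        (relPow_sub_self hR.1 (hf i hi) (hij ▸ hf j hj) h.le)
    · exact hmin (i - j) (by omega) (by omega)
        (relPow_sub_self hR.1 (hij ▸ hf j hj) (hf i hi) h.le)

end PeriodicPoints

section ClosedOrbits

variable {R S : ℕ → ℕ → Prop} {a b p : ℕ} {O : Set ℕ}

lemma relPow_ncard_self_of_mem_relClosedOrbits (hR : BiUnique R) (hO : O ∈ relClosedOrbits R)
    (hpos : 0 < O.ncard) (hb : b ∈ O) : relPow R O.ncard b b := by
  obtain ⟨⟨n, rfl⟩, hclosed⟩ := hO
  rw [← relOrbit_eq_of_mem hb] at hclosed hpos ⊢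
  have hforward : ∀ m, ∃ e ∈ relOrbit R b, relPow R m b e := by
    intro m
    induction m with
    | zero => exact ⟨b, mem_relOrbit_self R b, rfl⟩
    | succ m ih =>
      obtain ⟨e, he, hm⟩ := ih
      obtain ⟨c, hec⟩ := (hclosed he).1
      exact ⟨c, (relClosed_relOrbit R b e c hec).1 he, e, hm, hec⟩
  choose g hg using hforward
  have : Finite (relOrbit R b) := (Set.finite_of_ncard_pos hpos).to_subtype
  obtain ⟨i, j, hne, hij⟩ :=
    Finite.exists_ne_map_eq_of_infinite fun m => (⟨g m, (hg m).1⟩ : relOrbit R b)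
  have hij : g i = g j := congrArg Subtype.val hij
  have hperiodic : ∃ d, 0 < d ∧ relPow R d b b := by
    rcases Nat.lt_or_gt_of_ne hne with h | h
    · exact ⟨j - i, by omega, relPow_sub_self hR.1 (hg i).2 (hij ▸ (hg j).2) h.le⟩
    · exact ⟨i - j, by omega, relPow_sub_self hR.1 (hij ▸ (hg j).2) (hg i).2 h.le⟩
  obtain ⟨d', hd', hper'⟩ := hperiodic
  obtain ⟨d, hd, hper, hmin⟩ := exists_minimal_period hper' hd'
  rwa [ncard_relOrbit_eq_minimal_period hR hd hper hmin]

lemma relOrbit_mem_relClosedOrbits_of_relPow_prime (hR : BiUnique R) (hp : p.Prime)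
    (ha : relPow R p a a) (hna : ¬R a a) :
    relOrbit R a ∈ relClosedOrbits R ∧ (relOrbit R a).ncard = p := by
  obtain ⟨d, hd, hper, hmin⟩ := exists_minimal_period ha hp.pos
  have hdvd : d ∣ p := Nat.dvd_of_mod_eq_zero <| by
    by_contra h
    exact hmin _ (Nat.pos_of_ne_zero h) (Nat.mod_lt p hd) (relPow_mod hR.2 hper ha)
  obtain rfl : d = p := (hp.eq_one_or_self_of_dvd d hdvd).resolve_left fun h =>
    hna (relPow_one.1 (h ▸ hper))
  exact ⟨⟨⟨a, rfl⟩, relOrbit_subset_relDom_inter_relRan hR hd hper⟩,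
    ncard_relOrbit_eq_minimal_period hR hd hper hmin⟩

lemma sUnion_relClosedOrbits_ncard_prime (hR : BiUnique R) (hp : p.Prime) :
    ⋃₀ {O ∈ relClosedOrbits R | O.ncard = p} = {a | relPow R p a a ∧ ¬R a a} := by
  ext a
  constructor
  · rintro ⟨O, ⟨hO, rfl⟩, ha⟩
    refine ⟨relPow_ncard_self_of_mem_relClosedOrbits hR hO hp.pos ha,
      fun haa => hp.one_lt.ne' ?_⟩
    obtain ⟨⟨n, rfl⟩, -⟩ := hO
    rw [← relOrbit_eq_of_mem ha, relOrbit_eq_singleton_of_rel_self hR haa, Set.ncard_singleton]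
  · rintro ⟨ha, hna⟩
    exact ⟨relOrbit R a, relOrbit_mem_relClosedOrbits_of_relPow_prime hR hp ha hna,
      mem_relOrbit_self R a⟩

lemma ncard_relClosedOrbits_prime_mul (hR : BiUnique R) (hp : p.Prime) :
    {O ∈ relClosedOrbits R | O.ncard = p}.ncard * p = {a | relPow R p a a ∧ ¬R a a}.ncard := by
  rw [← sUnion_relClosedOrbits_ncard_prime hR hp,
    ((relOrbits_pairwiseDisjoint R).subset fun O hO => hO.1.1).ncard_sUnion_of_ncard_eq hp.pos
      fun O hO => hO.2]

theorem ncard_relClosedOrbits_prime_eq (hR : BiUnique R) (hS : BiUnique S) (hp : p.Prime)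
    (hfix : ∀ a, R a a ↔ S a a) (hfix_pow : ∀ a, relPow R p a a ↔ relPow S p a a) :
    {O ∈ relClosedOrbits R | O.ncard = p}.ncard =
      {O ∈ relClosedOrbits S | O.ncard = p}.ncard := by
  refine Nat.eq_of_mul_eq_mul_right hp.pos ?_
  simp only [ncard_relClosedOrbits_prime_mul hR hp, ncard_relClosedOrbits_prime_mul hS hp, hfix,
    hfix_pow]

end ClosedOrbits

section Words

variable {s : Set (ℕ × ℕ)}

lemma biUnique_letterRel (hs : PartInj s) : ∀ l, BiUnique (letterRel s l)
  | Sum.inl g =>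
    ⟨fun _ _ _ h h' => g.injective (h.trans h'.symm), fun _ _ _ h h' => h.symm.trans h'⟩
  | Sum.inr true => ⟨fun _ _ _ h h' => hs.2 h h', fun _ _ _ h h' => hs.1 h h'⟩
  | Sum.inr false => ⟨fun _ _ _ h h' => hs.1 h h', fun _ _ _ h h' => hs.2 h h'⟩

lemma biUnique_wordRel (hs : PartInj s) : ∀ w, BiUnique (wordRel s w)
  | [] => ⟨fun _ _ _ h h' => h.trans h'.symm, fun _ _ _ h h' => h.symm.trans h'⟩
  | l :: w => ⟨(biUnique_wordRel hs w).1.comp (biUnique_letterRel hs l).1,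
      (biUnique_wordRel hs w).2.comp (biUnique_letterRel hs l).2⟩

lemma wordRel_append (s : Set (ℕ × ℕ)) (u w : Word) {a b : ℕ} :
    wordRel s (u ++ w) a b ↔ ∃ c, wordRel s w a c ∧ wordRel s u c b := by
  induction u generalizing b with
  | nil => simp [wordRel]
  | cons l u ih =>
    simp only [List.cons_append, wordRel, ih]
    exact ⟨fun ⟨c, ⟨d, had, hdc⟩, hcb⟩ => ⟨d, had, c, hdc, hcb⟩,
      fun ⟨d, had, c, hdc, hcb⟩ => ⟨c, ⟨d, had, hdc⟩, hcb⟩⟩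

lemma wordRel_wpow (s : Set (ℕ × ℕ)) (v : Word) :
    ∀ m {a b : ℕ}, wordRel s (wpow v m) a b ↔ relPow (wordRel s v) m a b
  | 0, _, _ => Iff.rfl
  | m + 1, _, _ => by
    rw [show wpow v (m + 1) = v ++ wpow v m by simp [wpow, List.replicate_succ], wordRel_append]
    simp only [relPow_succ, wordRel_wpow s v m]

end Words

theorem statement13_general (G : Subgroup Perm') (r : ℕ → Fin 2)
    (s : Set (ℕ × ℕ)) (E : Set Word) (hs : ZdagCond G r s E)
    (t : Set (ℕ × ℕ)) (ht : ZCond G t E) (hle : ZLe t E s E) :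
    ZdagCond G r t E := by
  obtain ⟨hsZ, hsCycl, hsPow⟩ := hs
  refine ⟨ht, hsCycl, fun w hw v k hv hwk => ?_⟩
  obtain ⟨hpowE, hcode⟩ := hsPow w hw v k hv hwk
  refine ⟨hpowE, fun n hn i hi => ?_⟩
  have hp : (pPrime i).Prime := Nat.prime_nth_prime i
  have hpk : pPrime i ≤ k := (Nat.nth_monotone Nat.infinite_setOfPred_prime hi).trans hn
  have hfix : ∀ l, 0 < l → l ≤ k → ∀ a,
      relPow (wordRel t v) l a a ↔ relPow (wordRel s v) l a a := fun l hl hlk a => by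
    rw [← wordRel_wpow, ← wordRel_wpow]
    exact Set.ext_iff.1 (hle.2.2 _ (hpowE l hl hlk)) a
  rw [← hcode n hn i hi]
  unfold odag
  rw [ncard_relClosedOrbits_prime_eq (biUnique_wordRel ht.2.1 v) (biUnique_wordRel hsZ.2.1 v) hp
    (fun a => by simpa only [relPow_one] using hfix 1 one_pos (hp.one_lt.le.trans hpk) a)
    (hfix _ hp.pos hpk)]

/-- Every extension in `Z_G` of a condition of `Z†_G(r)` (with the same word
side) is itself a condition of `Z†_G(r)`. -/
theorem statement13 (G : Subgroup Perm') (hG : Cofinitary G) (r : ℕ → Fin 2)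
    (s : Set (ℕ × ℕ)) (E : Set Word) (hs : ZdagCond G r s E)
    (t : Set (ℕ × ℕ)) (ht : ZCond G t E) (hle : ZLe t E s E) :
    ZdagCond G r t E :=
  statement13_general G r s E hs t ht hle

end
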